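/- Let S be a regular semigroup and φ : 𝒢 → S¹ a skeleton mapping. Then there exists a unique semigroup homomorphism φ̄ : F°(X) → S¹ with [g]φ̄ = gφ for all g ∈ 𝒢; moreover the image F°(X)φ̄ equals the subsemigroup of S¹ generated by the set 𝒢φ, it is a regular subsemigroup of S¹, and it is a monoid with identity element 1φ. -/

import Mathlib

set_option autoImplicit false

universe u v

namespace Paper

/-- Anchors: `A = X ∪ X' ∪ {1}`. -/
inductive Anchor (X : Type u) : Type u where
  | one : Anchor X
  | pos : X → Anchor X
  | neg : X → Anchor X

namespace Anchor

/-- The involution `'` on anchors. -/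
def inv {X : Type u} : Anchor X → Anchor X
  | .one => .one
  | .pos x => .neg x
  | .neg x => .pos x

end Anchor

/-- Formal expressions for the `5`-tuples: `one` is `1`, `base x` is `g_{xx'}`, and
`node l a c b r` is the tuple `(l, a, c, b, r)`. -/
inductive G5 (X : Type u) : Type u where
  | one : G5 X
  | base : X → G5 X
  | node : G5 X → Anchor X → G5 X → Anchor X → G5 X → G5 X

namespace G5

variable {X : Type u}

/-- left entry `g^l` -/
def lt : G5 X → G5 X
  | .node l _ _ _ _ => l
  | _ => .one

/-- right entry `g^r` -/
def rt : G5 X → G5 X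
  | .node _ _ _ _ r => r
  | _ => .one

/-- middle entry `g^c` -/
def ct : G5 X → G5 X
  | .node _ _ c _ _ => c
  | _ => .one

/-- left anchor `g^{la}` -/
def la : G5 X → Anchor X
  | .node _ a _ _ _ => a
  | _ => .one

/-- right anchor `g^{ra}` -/
def ra : G5 X → Anchor X
  | .node _ _ _ b _ => b
  | .base x => .neg x
  | .one => .one

/-- the height `↑(g)` -/
def ht : G5 X → ℕ
  | .one => 0
  | .base _ => 1
  | .node l _ _ _ _ => ht l + 1

/-- membership in `𝒢_{i,e}` -/
inductive MemE : G5 X → ℕ → Prop where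
  | base (x : X) : MemE (.base x) 1
  | stepL {g : G5 X} {i : ℕ} (h : MemE g i) :
      MemE (.node g g.la.inv g.lt g.ra.inv g) (i + 1)
  | stepR {g : G5 X} {i : ℕ} (h : MemE g i) :
      MemE (.node g g.ra.inv g.lt g.la.inv g) (i + 1)

mutual
  /-- membership in `𝒢_{i,d}` -/
  inductive MemD : G5 X → ℕ → Prop where
    | mk {l c r : G5 X} {a b : Anchor X} {i : ℕ}
        (hl : Mem l (i + 1)) (hc : Mem c i) (hr : Mem r (i + 1)) (hne : l ≠ r)
        (hla : (c = l.lt ∧ a = l.la.inv) ∨ (c = l.rt ∧ a = l.ra.inv))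
        (hrb : (c = r.lt ∧ b = r.la.inv) ∨ (c = r.rt ∧ b = r.ra.inv)) :
        MemD (.node l a c b r) (i + 2)

  /-- membership in `𝒢_i` (with `𝒢_0 = {1}` and `𝒢_i = 𝒢_{i,e} ∪ 𝒢_{i,d}` for `i ≥ 1`) -/
  inductive Mem : G5 X → ℕ → Prop where
    | one : Mem .one 0
    | ofE {g : G5 X} {i : ℕ} (h : MemE g i) : Mem g i
    | ofD {g : G5 X} {i : ℕ} (h : MemD g i) : Mem g i
end

/-- `g ∈ 𝒢' = 𝒢^5 ∪ {1}` -/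
def InG' (g : G5 X) : Prop := ∃ i, Mem g i

/-- `g ∈ 𝒢^5 = ⋃_{i ≥ 1} 𝒢_i` -/
def IsTup (g : G5 X) : Prop := ∃ i, 1 ≤ i ∧ Mem g i

end G5

/-- The alphabet `𝒢 = 𝒢^5 ∪ A` (the symbol `1` is the anchor `1`). -/
def Letter (X : Type u) : Type u := Anchor X ⊕ {g : G5 X // g.IsTup}

/-- `𝒢⁺`, the free semigroup on `𝒢`. -/
abbrev W (X : Type u) := FreeSemigroup (Letter X)

/-- the one-letter word given by an anchor -/
def wA {X : Type u} (a : Anchor X) : W X := FreeSemigroup.of (Sum.inl a)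

open Classical in
/-- the one-letter word given by an element of `𝒢'` (the element `1` of `𝒢'` is the
same letter as the anchor `1`) -/
noncomputable def wG {X : Type u} (g : G5 X) : W X :=
  if h : g.IsTup then FreeSemigroup.of (Sum.inr ⟨g, h⟩) else wA Anchor.one

/-- the three-letter word `g^L = (g^{la})' g^l g^{la}` -/
noncomputable def wL {X : Type u} (g : G5 X) : W X := wA g.la.inv * wG g.lt * wA g.la

/-- the three-letter word `g^R = (g^{ra})' g^r g^{ra}` -/
noncomputable def wR {X : Type u} (g : G5 X) : W X := wA g.ra.inv * wG g.rt * wA g.ra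

/-- The generating pairs of the congruence `ρ`. -/
inductive Rel {X : Type u} : W X → W X → Prop where
  | xinvx (x : X) : Rel (wA (.pos x) * wA (.neg x) * wA (.pos x)) (wA (.pos x))
  | invxinv (x : X) : Rel (wA (.neg x) * wA (.pos x) * wA (.neg x)) (wA (.neg x))
  | gbase (x : X) : Rel (wG (.base x)) (wA (.pos x) * wA (.neg x))
  | one_mul {g : G5 X} (h : g.InG') : Rel (wA .one * wG g) (wG g)
  | mul_one {g : G5 X} (h : g.InG') : Rel (wG g * wA .one) (wG g)
  | idem {g : G5 X} (h : g.InG') : Rel (wG g * wG g) (wG g)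
  | cLg {g : G5 X} {i : ℕ} (h : G5.Mem g i) (h2 : 2 ≤ i) :
      Rel (wG g.ct * wL g * wG g) (wG g)
  | gRc {g : G5 X} {i : ℕ} (h : G5.Mem g i) (h2 : 2 ≤ i) :
      Rel (wG g * wR g * wG g.ct) (wG g)
  | RgL {g : G5 X} {i : ℕ} (h : G5.Mem g i) (h2 : 2 ≤ i) :
      Rel (wR g * wG g * wL g) (wR g * wG g.ct * wL g)

/-- The congruence `ρ` generated by `Rel`. -/
def rho (X : Type u) : Con (W X) := conGen Rel

/-- `F°(X) = 𝒢⁺/ρ`. -/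
abbrev Fo (X : Type u) := (rho X).Quotient

/-- `[u]`, the `ρ`-class of a word `u ∈ 𝒢⁺`. -/
def cl {X : Type u} (u : W X) : Fo X := u

/-- left anchored triplet -/
def LeftAnch {X : Type u} (g1 : G5 X) (a : Anchor X) (g2 : G5 X) : Prop :=
  (g1 = g2.lt ∧ a = g2.la) ∨ (g1 = g2.rt ∧ a = g2.ra)

/-- right anchored triplet -/
def RightAnch {X : Type u} (g1 : G5 X) (a : Anchor X) (g2 : G5 X) : Prop :=
  (g2 = g1.lt ∧ a = g1.la.inv) ∨ (g2 = g1.rt ∧ a = g1.ra.inv)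

/-- anchored triplet -/
def Anch {X : Type u} (g1 : G5 X) (a : Anchor X) (g2 : G5 X) : Prop :=
  LeftAnch g1 a g2 ∨ RightAnch g1 a g2

/-- A (potential) landscape `g₀a₁g₁⋯aₙgₙ`, recorded as its first letter `g₀` together
with the list of pairs `(a₁,g₁), …, (aₙ,gₙ)`. -/
structure Landscape (X : Type u) : Type u where
  head : G5 X
  tail : List (Anchor X × G5 X)

/-- last letter of `g :: (map snd l)` -/
def endAt {X : Type u} (g : G5 X) (l : List (Anchor X × G5 X)) : G5 X :=
  (l.map Prod.snd).getLastD g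

/-- every consecutive triplet is anchored -/
def ChainAnch {X : Type u} : G5 X → List (Anchor X × G5 X) → Prop
  | _, [] => True
  | g, (a, h) :: rest => Anch g a h ∧ ChainAnch h rest

/-- heights increase by one at each step -/
def ChainUp {X : Type u} : G5 X → List (Anchor X × G5 X) → Prop
  | _, [] => True
  | g, (_, h) :: rest => G5.ht h = G5.ht g + 1 ∧ ChainUp h rest

/-- heights decrease by one at each step -/
def ChainDown {X : Type u} : G5 X → List (Anchor X × G5 X) → Prop
  | _, [] => True
  | g, (_, h) :: rest => G5.ht h + 1 = G5.ht g ∧ ChainDown h rest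

/-- the maximal ascending prefix -/
def upPre {X : Type u} : G5 X → List (Anchor X × G5 X) → List (Anchor X × G5 X)
  | _, [] => []
  | g, (a, h) :: rest => if G5.ht h = G5.ht g + 1 then (a, h) :: upPre h rest else []

namespace Landscape

variable {X : Type u}

/-- the letters subsequence `g₀g₁⋯gₙ` -/
def letters (L : Landscape X) : List (G5 X) := L.head :: L.tail.map Prod.snd

/-- the anchors subsequence `a₁⋯aₙ` -/
def anchors (L : Landscape X) : List (Anchor X) := L.tail.map Prod.fst

/-- the word `g₀a₁g₁⋯aₙgₙ ∈ 𝒢⁺` -/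
noncomputable def word (L : Landscape X) : W X :=
  L.tail.foldl (fun w p => w * wA p.1 * wG p.2) (wG L.head)

/-- the last letter `gₙ` -/
def last (L : Landscape X) : G5 X := endAt L.head L.tail

/-- `L` is a landscape: all letters in `𝒢'` and all triplets anchored -/
def IsLandscape (L : Landscape X) : Prop :=
  (∀ g ∈ L.letters, g.InG') ∧ ChainAnch L.head L.tail

/-- `L` is an uphill -/
def IsUphill (L : Landscape X) : Prop := L.IsLandscape ∧ ChainUp L.head L.tail

/-- `L` is a downhill -/
def IsDownhill (L : Landscape X) : Prop := L.IsLandscape ∧ ChainDown L.head L.tail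

/-- `L` is an uphill followed by a downhill -/
def IsUpDown (L : Landscape X) : Prop :=
  L.IsLandscape ∧ ∃ utl dtl, L.tail = utl ++ dtl ∧
    ChainUp L.head utl ∧ ChainDown (endAt L.head utl) dtl

/-- `L` is a mountain -/
def IsMountain (L : Landscape X) : Prop :=
  L.IsLandscape ∧ L.head = G5.one ∧
    (L.tail = [] ∨
      ∃ utl dtl, L.tail = utl ++ dtl ∧ utl ≠ [] ∧ dtl ≠ [] ∧
        ChainUp L.head utl ∧ ChainDown (endAt L.head utl) dtl ∧ L.last = G5.one)

/-- `λ_l(L)`, the maximal uphill prefix -/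
def lamL (L : Landscape X) : Landscape X := ⟨L.head, upPre L.head L.tail⟩

/-- landscape from a list of letters and a list of anchors -/
def mk' (gs : List (G5 X)) (as : List (Anchor X)) : Landscape X :=
  ⟨gs.headD G5.one, as.zip gs.tail⟩

/-- the reverse landscape `L⃖ = gₙaₙ'g_{n-1}⋯a₁'g₀` -/
def rev (L : Landscape X) : Landscape X :=
  mk' L.letters.reverse (L.anchors.reverse.map Anchor.inv)

/-- `λ_r(L)`, the maximal downhill suffix -/
def lamR (L : Landscape X) : Landscape X := L.rev.lamL.rev

/-- the peak `κ(L)` of a mountain -/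
def peak (L : Landscape X) : G5 X := L.lamL.last

/-- the word of `L` with its first letter removed -/
noncomputable def tailWord (L : Landscape X) : W X :=
  match L.tail with
  | [] => wA Anchor.one
  | (a, h) :: rest => rest.foldl (fun w p => w * wA p.1 * wG p.2) (wA a * wG h)

/-- `L * M` : the concatenation of the two words without repeating the common letter
`L.last = M.head` at the junction -/
noncomputable def star (L M : Landscape X) : W X :=
  match M.tail with
  | [] => L.word
  | _ :: _ => L.word * M.tailWord

end Landscape

/-- the ground `ε(g)` of `g ∈ 𝒢'` -/
def ground {X : Type u} : G5 X → Set (G5 X)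
  | .one => {G5.one}
  | .base x => {G5.one, G5.base x}
  | .node l a c b r => ground l ∪ {G5.node l a c b r} ∪ ground r

/-- the ground `ε(L)` of a landscape -/
def Landscape.grd {X : Type u} (L : Landscape X) : Set (G5 X) :=
  {h | ∃ g ∈ L.letters, h ∈ ground g}

section Green

variable {X : Type u}

/-- `s ≤_R t`, i.e. `sM ⊆ tM` -/
def leR (s t : Fo X) : Prop := ∀ z : Fo X, (∃ m, z = s * m) → ∃ m, z = t * m

/-- `s ≤_L t`, i.e. `Ms ⊆ Mt` -/
def leL (s t : Fo X) : Prop := ∀ z : Fo X, (∃ m, z = m * s) → ∃ m, z = m * t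

/-- `s ≤_J t`, i.e. `MsM ⊆ MtM` -/
def leJ (s t : Fo X) : Prop :=
  ∀ z : Fo X, (∃ m m', z = m * s * m') → ∃ m m', z = m * t * m'

/-- Green's relation `R` -/
def RRel (s t : Fo X) : Prop := leR s t ∧ leR t s

/-- Green's relation `L` -/
def LRel (s t : Fo X) : Prop := leL s t ∧ leL t s

/-- Green's relation `J` -/
def JRel (s t : Fo X) : Prop := leJ s t ∧ leJ t s

/-- Green's relation `H` -/
def HRel (s t : Fo X) : Prop := RRel s t ∧ LRel s t

/-- Green's relation `D = R ∘ L` -/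
def DRel (s t : Fo X) : Prop := ∃ w, RRel s w ∧ LRel w t

end Green

/-- `u` is a prefix of `v` -/
def WPrefix {X : Type u} (u v : W X) : Prop := u = v ∨ ∃ w, u * w = v

/-- `u` is a suffix of `v` -/
def WSuffix {X : Type u} (u v : W X) : Prop := u = v ∨ ∃ w, w * u = v

/-- the sandwich set `S(e,f)` of two idempotents -/
def sandwichSet {S : Type v} [Mul S] (e f : S) : Set S :=
  {g | g * g = g ∧ f * g = g ∧ g * e = g ∧ e * g * f = e * f}

/-- a regular semigroup -/
def IsRegular (S : Type v) [Mul S] : Prop :=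
  ∀ s : S, ∃ t : S, s * t * s = s ∧ t * s * t = t

/-- a subsemigroup which is a regular semigroup on its own -/
def RegularIn {S : Type v} [Semigroup S] (T : Subsemigroup S) : Prop :=
  ∀ t ∈ T, ∃ t' ∈ T, t * t' * t = t ∧ t' * t * t' = t'

/-- `S` is weakly generated by `Y`: no proper regular subsemigroup contains `Y` -/
def WeaklyGen {S : Type v} [Semigroup S] (Y : Set S) : Prop :=
  ∀ T : Subsemigroup S, RegularIn T → Y ⊆ ↑T → T = ⊤

section Skeleton

variable {X : Type u} {S : Type v} [Semigroup S]

open Classical in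
/-- the value of `φ : 𝒢 → S¹` at an element `g` of `𝒢'` -/
noncomputable def appG (φ : Letter X → WithOne S) (g : G5 X) : WithOne S :=
  if h : g.IsTup then φ (Sum.inr ⟨g, h⟩) else φ (Sum.inl Anchor.one)

/-- the value of `φ : 𝒢 → S¹` at an anchor -/
def appA (φ : Letter X → WithOne S) (a : Anchor X) : WithOne S := φ (Sum.inl a)

/-- `g^{φ,l} = (g^cφ)((g^{la})'φ)(g^lφ)(g^{la}φ)` -/
noncomputable def phiL (φ : Letter X → WithOne S) (g : G5 X) : WithOne S :=
  appG φ g.ct * appA φ g.la.inv * appG φ g.lt * appA φ g.la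

/-- `g^{φ,r} = ((g^{ra})'φ)(g^rφ)(g^{ra}φ)(g^cφ)` -/
noncomputable def phiR (φ : Letter X → WithOne S) (g : G5 X) : WithOne S :=
  appA φ g.ra.inv * appG φ g.rt * appA φ g.ra * appG φ g.ct

/-- `φ : 𝒢 → S¹` is a skeleton mapping (condition (iii) uses the sandwich set of
two not-necessarily-idempotent elements: `S(a,b) = S(a*a, bb*)` for inverses `a*`, `b*`) -/
def IsSkeleton (φ : Letter X → WithOne S) : Prop :=
  (∀ x : X,
    (∃ s : S, appA φ (.pos x) = (s : WithOne S)) ∧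
    (∃ s : S, appA φ (.neg x) = (s : WithOne S)) ∧
    appA φ (.pos x) * appA φ (.neg x) * appA φ (.pos x) = appA φ (.pos x) ∧
    appA φ (.neg x) * appA φ (.pos x) * appA φ (.neg x) = appA φ (.neg x) ∧
    appG φ (G5.base x) = appA φ (.pos x) * appA φ (.neg x)) ∧
  (∀ a : Anchor X,
    appA φ .one * appA φ a = appA φ a ∧ appA φ a * appA φ .one = appA φ a) ∧
  (∀ (g : G5 X) (i : ℕ), G5.Mem g i → 2 ≤ i →
    ∃ r' l' : WithOne S,
      phiR φ g * r' * phiR φ g = phiR φ g ∧ r' * phiR φ g * r' = r' ∧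
      phiL φ g * l' * phiL φ g = phiL φ g ∧ l' * phiL φ g * l' = l' ∧
      appG φ g ∈ sandwichSet (r' * phiR φ g) (phiL φ g * l'))

end Skeleton


/-! ### Development for statement18 -/

section Dev

variable {X : Type u} {S : Type v} [Semigroup S]

namespace Anchor

@[simp] lemma inv_inv (a : Anchor X) : a.inv.inv = a := by
  cases a <;> rfl

end Anchor

namespace G5

@[simp] lemma lt_node (l : G5 X) (a : Anchor X) (c : G5 X) (b : Anchor X) (r : G5 X) :
    (node l a c b r).lt = l := rfl
@[simp] lemma rt_node (l : G5 X) (a : Anchor X) (c : G5 X) (b : Anchor X) (r : G5 X) :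
    (node l a c b r).rt = r := rfl
@[simp] lemma ct_node (l : G5 X) (a : Anchor X) (c : G5 X) (b : Anchor X) (r : G5 X) :
    (node l a c b r).ct = c := rfl
@[simp] lemma la_node (l : G5 X) (a : Anchor X) (c : G5 X) (b : Anchor X) (r : G5 X) :
    (node l a c b r).la = a := rfl
@[simp] lemma ra_node (l : G5 X) (a : Anchor X) (c : G5 X) (b : Anchor X) (r : G5 X) :
    (node l a c b r).ra = b := rfl

@[simp] lemma lt_base (x : X) : (base x).lt = one := rfl
@[simp] lemma rt_base (x : X) : (base x).rt = one := rfl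
@[simp] lemma ct_base (x : X) : (base x).ct = one := rfl
@[simp] lemma la_base (x : X) : (base x).la = Anchor.one := rfl
@[simp] lemma ra_base (x : X) : (base x).ra = Anchor.neg x := rfl
@[simp] lemma lt_one : (one : G5 X).lt = one := rfl
@[simp] lemma rt_one : (one : G5 X).rt = one := rfl
@[simp] lemma la_one : (one : G5 X).la = Anchor.one := rfl
@[simp] lemma ra_one : (one : G5 X).ra = Anchor.one := rfl

lemma memE_one_le {g : G5 X} {i : ℕ} (h : MemE g i) : 1 ≤ i := by
  cases h <;> omega

lemma memE_lt_eq_rt {g : G5 X} {i : ℕ} (h : MemE g i) : g.lt = g.rt := by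
  cases h <;> rfl

lemma memE_lt_mem {g : G5 X} {i : ℕ} (h : MemE g (i + 1)) : Mem g.lt i := by
  cases h with
  | base x => exact Mem.one
  | stepL h => exact Mem.ofE h
  | stepR h => exact Mem.ofE h

lemma mem_one_ht {i : ℕ} (h : Mem (G5.one : G5 X) i) : i = 0 := by
  cases h with
  | one => rfl
  | ofE h => cases h
  | ofD h => cases h

lemma mem_zero {g : G5 X} (h : Mem g 0) : g = G5.one := by
  cases h with
  | one => rfl
  | ofE h => exact absurd (memE_one_le h) (by omega)
  | ofD h => cases h

lemma mem_one_inv {g : G5 X} (h : Mem g 1) : ∃ x : X, g = G5.base x := by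
  cases h with
  | ofE h =>
    cases h with
    | base x => exact ⟨x, rfl⟩
    | stepL h => exact absurd (memE_one_le h) (by omega)
    | stepR h => exact absurd (memE_one_le h) (by omega)
  | ofD h => cases h

lemma mem_base_ht {x : X} {i : ℕ} (h : Mem (G5.base x) i) : i = 1 := by
  cases h with
  | ofE h => cases h; rfl
  | ofD h => cases h

lemma not_isTup_one : ¬ (G5.one : G5 X).IsTup := by
  rintro ⟨i, h1, h⟩
  have := mem_one_ht h
  omega

lemma isTup_of_mem {g : G5 X} {i : ℕ} (h : Mem g i) (h1 : 1 ≤ i) : g.IsTup := ⟨i, h1, h⟩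

/-- inversion for membership at height `≥ 2` -/
lemma mem_inv {g : G5 X} {i : ℕ} (h : Mem g (i + 2)) :
    ∃ l A c B r, g = G5.node l A c B r ∧ Mem l (i + 1) ∧ Mem c i ∧ Mem r (i + 1) ∧
      ((c = l.lt ∧ A = l.la.inv) ∨ (c = l.rt ∧ A = l.ra.inv)) ∧
      ((c = r.lt ∧ B = r.la.inv) ∨ (c = r.rt ∧ B = r.ra.inv)) := by
  cases h with
  | ofE h =>
    cases h with
    | @stepL g' i' h' =>
      refine ⟨g', g'.la.inv, g'.lt, g'.ra.inv, g', rfl, Mem.ofE h', memE_lt_mem h',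
        Mem.ofE h', Or.inl ⟨rfl, rfl⟩, Or.inr ⟨(memE_lt_eq_rt h').symm ▸ rfl, rfl⟩⟩
    | @stepR g' i' h' =>
      refine ⟨g', g'.ra.inv, g'.lt, g'.la.inv, g', rfl, Mem.ofE h', memE_lt_mem h',
        Mem.ofE h', Or.inr ⟨memE_lt_eq_rt h' ▸ rfl, rfl⟩, Or.inl ⟨rfl, rfl⟩⟩
  | ofD h =>
    cases h with
    | mk hl hc hr hne hla hrb =>
      exact ⟨_, _, _, _, _, rfl, hl, hc, hr, hla, hrb⟩

lemma mem_ht {g : G5 X} : ∀ {i : ℕ}, Mem g i → g.ht = i := by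
  induction g with
  | one => intro i h; exact (mem_one_ht h).symm ▸ rfl
  | base x => intro i h; exact (mem_base_ht h).symm ▸ rfl
  | node l a c b r ihl ihc ihr =>
    intro i h
    cases h with
    | ofE h =>
      cases h with
      | @stepL g' i' h' => simp only [G5.ht]; rw [ihl (Mem.ofE h')]
      | @stepR g' i' h' => simp only [G5.ht]; rw [ihl (Mem.ofE h')]
    | ofD h =>
      cases h with
      | mk hl hc hr hne hla hrb => simp only [G5.ht]; rw [ihl hl]

lemma mem_unique {g : G5 X} {i j : ℕ} (h1 : Mem g i) (h2 : Mem g j) : i = j := by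
  rw [← mem_ht h1, ← mem_ht h2]

lemma memE_of_lt_eq_rt {g : G5 X} {i : ℕ} (h : Mem g i) (h1 : 1 ≤ i) (he : g.lt = g.rt) :
    MemE g i := by
  cases h with
  | one => omega
  | ofE h => exact h
  | ofD h =>
    cases h with
    | mk hl hc hr hne hla hrb => exact absurd he hne

end G5

end Dev

set_option linter.unusedSectionVars false

/-- Abstract derivation from the sandwich data, in any monoid. -/
lemma sandwichMagic {M : Type v} [Monoid M] (G C Lg Aa Ai Bi Rg Ba r' l' : M)
    (hgg : G * G = G)
    (hfg : C * Ai * Lg * Aa * l' * G = G)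
    (hge : G * (r' * (Bi * Rg * Ba * C)) = G)
    (hegf : r' * (Bi * Rg * Ba * C) * G * (C * Ai * Lg * Aa * l') =
      r' * (Bi * Rg * Ba * C) * (C * Ai * Lg * Aa * l'))
    (hR1 : Bi * Rg * Ba * C * r' * (Bi * Rg * Ba * C) = Bi * Rg * Ba * C)
    (hL1 : C * Ai * Lg * Aa * l' * (C * Ai * Lg * Aa) = C * Ai * Lg * Aa)
    (s1 : ∀ w : M, w * C * C = w * C)
    (s2 : ∀ w : M, w * Ai * Lg * Aa * C * Ai * Lg * Aa = w * Ai * Lg * Aa)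
    (s3 : ∀ w : M, w * Bi * Rg * Ba * C * Bi * Rg * Ba = w * Bi * Rg * Ba) :
    (∀ w : M, w * G * Ai * Lg * Aa * G = w * G) ∧
    (∀ w : M, w * G * Bi * Rg * Ba * G = w * G) ∧
    (C * Ai * Lg * Aa * G = G) ∧
    (G * Bi * Rg * Ba * C = G) ∧
    (Bi * Rg * Ba * G * Ai * Lg * Aa = Bi * Rg * Ba * C * Ai * Lg * Aa) := by
  have s1' : C * C = C := by have := s1 1; simpa using this
  have s3' : Bi * Rg * Ba * C * Bi * Rg * Ba = Bi * Rg * Ba := by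
    have := s3 1; simpa using this
  -- phiL, phiR idempotent
  have s4 : C * Ai * Lg * Aa * (C * Ai * Lg * Aa) = C * Ai * Lg * Aa := by
    simp only [← mul_assoc]
    exact s2 C
  have s5 : Bi * Rg * Ba * C * (Bi * Rg * Ba * C) = Bi * Rg * Ba * C := by
    calc Bi * Rg * Ba * C * (Bi * Rg * Ba * C)
        = Bi * Rg * Ba * C * Bi * Rg * Ba * C := by simp only [← mul_assoc]
      _ = Bi * Rg * Ba * C := by rw [s3']
  -- C * G = G
  have s6 : C * G = G := by
    calc C * G = C * (C * Ai * Lg * Aa * l' * G) := by rw [hfg]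
      _ = C * C * Ai * Lg * Aa * l' * G := by simp only [← mul_assoc]
      _ = C * Ai * Lg * Aa * l' * G := by rw [s1']
      _ = G := hfg
  -- G * C = G
  have s7 : G * C = G := by
    calc G * C = G * (r' * (Bi * Rg * Ba * C)) * C := by rw [hge]
      _ = G * r' * Bi * Rg * Ba * C * C := by simp only [← mul_assoc]
      _ = G * r' * Bi * Rg * Ba * C := by rw [s1]
      _ = G * (r' * (Bi * Rg * Ba * C)) := by simp only [← mul_assoc]
      _ = G := hge
  -- lemma A : phiL * G = G
  have s8 : C * Ai * Lg * Aa * G = G := by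
    calc C * Ai * Lg * Aa * G
        = C * Ai * Lg * Aa * (C * Ai * Lg * Aa * l' * G) := by rw [hfg]
      _ = C * Ai * Lg * Aa * (C * Ai * Lg * Aa) * l' * G := by simp only [← mul_assoc]
      _ = C * Ai * Lg * Aa * l' * G := by rw [s4]
      _ = G := hfg
  -- lemma B : G * phiR = G
  have s9 : G * Bi * Rg * Ba * C = G := by
    calc G * Bi * Rg * Ba * C
        = G * (r' * (Bi * Rg * Ba * C)) * Bi * Rg * Ba * C := by rw [hge]
      _ = G * r' * (Bi * Rg * Ba * C * (Bi * Rg * Ba * C)) := by simp only [← mul_assoc]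
      _ = G * r' * (Bi * Rg * Ba * C) := by rw [s5]
      _ = G * (r' * (Bi * Rg * Ba * C)) := by rw [mul_assoc]
      _ = G := hge
  refine ⟨?_, ?_, s8, s9, ?_⟩
  · -- K1
    intro w
    calc w * G * Ai * Lg * Aa * G
        = w * (G * C) * Ai * Lg * Aa * G := by rw [s7]
      _ = w * G * (C * Ai * Lg * Aa * G) := by simp only [← mul_assoc]
      _ = w * G * G := by rw [s8]
      _ = w * G := by rw [mul_assoc, hgg]
  · -- K2
    intro w
    calc w * G * Bi * Rg * Ba * G
        = w * G * Bi * Rg * Ba * (C * G) := by rw [s6]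
      _ = w * (G * Bi * Rg * Ba * C) * G := by simp only [← mul_assoc]
      _ = w * G * G := by rw [s9]
      _ = w * G := by rw [mul_assoc, hgg]
  · -- lemma C : ψR * G * ψL = ψR * C * ψL
    have hR1' : Bi * Rg * Ba * C * r' * Bi * Rg * Ba * C = Bi * Rg * Ba * C := by
      simpa only [← mul_assoc] using hR1
    have hL1' : C * Ai * Lg * Aa * l' * C * Ai * Lg * Aa = C * Ai * Lg * Aa := by
      simpa only [← mul_assoc] using hL1
    have cL1 : ∀ w : M, w * C * Ai * Lg * Aa * l' * C * Ai * Lg * Aa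
        = w * C * Ai * Lg * Aa := by
      intro w
      simp only [mul_assoc]
      exact congrArg (w * ·) (by simp only [← mul_assoc]; exact hL1')
    have T1 : Bi * Rg * Ba * C * G * C * Ai * Lg * Aa * l' =
        Bi * Rg * Ba * C * C * Ai * Lg * Aa * l' := by
      have t0 := congrArg (fun z => Bi * Rg * Ba * C * z) hegf
      simp only [← mul_assoc] at t0
      rwa [hR1'] at t0
    have T2 : Bi * Rg * Ba * C * G * C * Ai * Lg * Aa =
        Bi * Rg * Ba * C * C * Ai * Lg * Aa := by
      have t0 := congrArg (fun z => z * (C * Ai * Lg * Aa)) T1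
      simp only [← mul_assoc] at t0
      simpa only [cL1] using t0
    calc Bi * Rg * Ba * G * Ai * Lg * Aa
        = Bi * Rg * Ba * (C * G) * Ai * Lg * Aa := by rw [s6]
      _ = Bi * Rg * Ba * C * (G * C) * Ai * Lg * Aa := by
          rw [s7]; simp only [← mul_assoc]
      _ = Bi * Rg * Ba * C * G * C * Ai * Lg * Aa := by simp only [← mul_assoc]
      _ = Bi * Rg * Ba * C * C * Ai * Lg * Aa := T2
      _ = Bi * Rg * Ba * C * Ai * Lg * Aa := by rw [s1 (Bi * Rg * Ba)]

section Skel

variable {X : Type u} {S : Type v} [Semigroup S] (φ : Letter X → WithOne S)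

open G5

lemma appG_one : appG φ (G5.one : G5 X) = appA φ Anchor.one := by
  rw [appG, dif_neg G5.not_isTup_one]; rfl

lemma appG_tup {g : G5 X} (h : g.IsTup) : appG φ g = φ (Sum.inr ⟨g, h⟩) := dif_pos h

/-- context versions of the elementary identities -/
lemma ctx_aoa (hφ : IsSkeleton φ) : ∀ (w : WithOne S) (a : Anchor X),
    w * appA φ Anchor.one * appA φ a = w * appA φ a := by
  intro w a
  rw [mul_assoc, (hφ.2.1 a).1]

lemma ctx_aao (hφ : IsSkeleton φ) : ∀ (w : WithOne S) (a : Anchor X),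
    w * appA φ a * appA φ Anchor.one = w * appA φ a := by
  intro w a
  rw [mul_assoc, (hφ.2.1 a).2]

lemma ctx_pnp (hφ : IsSkeleton φ) : ∀ (w : WithOne S) (x : X),
    w * appA φ (.pos x) * appA φ (.neg x) * appA φ (.pos x) = w * appA φ (.pos x) := by
  intro w x
  simp only [mul_assoc]
  exact congrArg (w * ·) (by simp only [← mul_assoc]; exact (hφ.1 x).2.2.1)

lemma ctx_npn (hφ : IsSkeleton φ) : ∀ (w : WithOne S) (x : X),
    w * appA φ (.neg x) * appA φ (.pos x) * appA φ (.neg x) = w * appA φ (.neg x) := by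
  intro w x
  simp only [mul_assoc]
  exact congrArg (w * ·) (by simp only [← mul_assoc]; exact (hφ.1 x).2.2.2.1)

lemma gbase_eq (hφ : IsSkeleton φ) (x : X) :
    appG φ (G5.base x) = appA φ (.pos x) * appA φ (.neg x) := (hφ.1 x).2.2.2.2

lemma idemG (hφ : IsSkeleton φ) : ∀ {i : ℕ} {g : G5 X},
    Mem g i → appG φ g * appG φ g = appG φ g := by
  intro i g h
  match i with
  | 0 =>
    obtain rfl := mem_zero h
    rw [appG_one]
    exact (hφ.2.1 Anchor.one).1
  | 1 =>
    obtain ⟨x, rfl⟩ := mem_one_inv h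
    rw [gbase_eq φ hφ x]
    calc appA φ (.pos x) * appA φ (.neg x) * (appA φ (.pos x) * appA φ (.neg x))
        = appA φ (.pos x) * appA φ (.neg x) * appA φ (.pos x) * appA φ (.neg x) := by
          rw [← mul_assoc]
      _ = appA φ (.pos x) * appA φ (.neg x) := by rw [(hφ.1 x).2.2.1]
  | (i + 2) =>
    obtain ⟨r', l', _, _, _, _, hs⟩ := hφ.2.2 g (i + 2) h (by omega)
    exact hs.1

lemma ctx_idemG (hφ : IsSkeleton φ) {i : ℕ} {g : G5 X} (h : Mem g i) :
    ∀ w : WithOne S, w * appG φ g * appG φ g = w * appG φ g := by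
  intro w
  rw [mul_assoc, idemG φ hφ h]

/-- The key absorption identities, stated in context form. -/
theorem keyK (hφ : IsSkeleton φ) : ∀ (i : ℕ) (g : G5 X), Mem g i →
    (∀ w : WithOne S,
      w * appG φ g * appA φ g.la.inv * appG φ g.lt * appA φ g.la * appG φ g = w * appG φ g) ∧
    (∀ w : WithOne S,
      w * appG φ g * appA φ g.ra.inv * appG φ g.rt * appA φ g.ra * appG φ g = w * appG φ g)
  | 0, g, h => by
    obtain rfl := mem_zero h
    constructor <;> intro w <;>
      simp only [G5.lt, G5.rt, G5.la, G5.ra, Anchor.inv, appG_one] <;>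
      simp only [ctx_aao φ hφ]
  | 1, g, h => by
    obtain ⟨x, rfl⟩ := mem_one_inv h
    constructor <;> intro w <;>
      simp only [G5.lt, G5.rt, G5.la, G5.ra, Anchor.inv, appG_one, gbase_eq φ hφ x,
        ← mul_assoc] <;>
      simp only [ctx_aao φ hφ, ctx_aoa φ hφ, ctx_pnp φ hφ]
  | (i + 2), g, h => by
    obtain ⟨l, A, c, B, r, rfl, hl, hc, hr, hla, hrb⟩ := mem_inv h
    have IHl := keyK hφ (i + 1) l hl
    have IHr := keyK hφ (i + 1) r hr
    obtain ⟨r', l', hR1, hR2, hL1, hL2, hgg, hfg, hge, hegf⟩ :=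
      hφ.2.2 (G5.node l A c B r) (i + 2) h (by omega)
    simp only [phiL, phiR, G5.ct_node, G5.lt_node, G5.rt_node, G5.la_node, G5.ra_node] at *
    have s2 : ∀ w : WithOne S, w * appA φ A.inv * appG φ l * appA φ A * appG φ c *
        appA φ A.inv * appG φ l * appA φ A
        = w * appA φ A.inv * appG φ l * appA φ A := by
      intro w
      rcases hla with ⟨hce, hae⟩ | ⟨hce, hae⟩ <;> subst hce <;> subst hae <;>
        simp only [Anchor.inv_inv]
      · rw [IHl.1 (w * appA φ l.la)]
      · rw [IHl.2 (w * appA φ l.ra)]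
    have s3 : ∀ w : WithOne S, w * appA φ B.inv * appG φ r * appA φ B * appG φ c *
        appA φ B.inv * appG φ r * appA φ B
        = w * appA φ B.inv * appG φ r * appA φ B := by
      intro w
      rcases hrb with ⟨hce, hbe⟩ | ⟨hce, hbe⟩ <;> subst hce <;> subst hbe <;>
        simp only [Anchor.inv_inv]
      · rw [IHr.1 (w * appA φ r.la)]
      · rw [IHr.2 (w * appA φ r.ra)]
    have magic := sandwichMagic (appG φ (G5.node l A c B r)) (appG φ c) (appG φ l)
      (appA φ A) (appA φ A.inv) (appA φ B.inv) (appG φ r) (appA φ B) r' l'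
      hgg hfg hge hegf hR1 hL1 (ctx_idemG φ hφ hc) s2 s3
    exact ⟨magic.1, magic.2.1⟩

/-- The three relation identities for tuples of height `≥ 2`:
`phiL·G = G`, `G·phiR = G`, and `ψR·G·ψL = ψR·C·ψL`. -/
theorem lemABC (hφ : IsSkeleton φ) {i : ℕ} {g : G5 X} (h : Mem g (i + 2)) :
    (appG φ g.ct * appA φ g.la.inv * appG φ g.lt * appA φ g.la * appG φ g = appG φ g) ∧
    (appG φ g * appA φ g.ra.inv * appG φ g.rt * appA φ g.ra * appG φ g.ct = appG φ g) ∧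
    (appA φ g.ra.inv * appG φ g.rt * appA φ g.ra * appG φ g *
        appA φ g.la.inv * appG φ g.lt * appA φ g.la =
      appA φ g.ra.inv * appG φ g.rt * appA φ g.ra * appG φ g.ct *
        appA φ g.la.inv * appG φ g.lt * appA φ g.la) := by
  obtain ⟨l, A, c, B, r, rfl, hl, hc, hr, hla, hrb⟩ := mem_inv h
  have IHl := keyK φ hφ (i + 1) l hl
  have IHr := keyK φ hφ (i + 1) r hr
  obtain ⟨r', l', hR1, hR2, hL1, hL2, hgg, hfg, hge, hegf⟩ :=
    hφ.2.2 (G5.node l A c B r) (i + 2) h (by omega)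
  simp only [phiL, phiR, G5.ct_node, G5.lt_node, G5.rt_node, G5.la_node, G5.ra_node] at *
  have s2 : ∀ w : WithOne S, w * appA φ A.inv * appG φ l * appA φ A * appG φ c *
      appA φ A.inv * appG φ l * appA φ A
      = w * appA φ A.inv * appG φ l * appA φ A := by
    intro w
    rcases hla with ⟨hce, hae⟩ | ⟨hce, hae⟩ <;> subst hce <;> subst hae <;>
      simp only [Anchor.inv_inv]
    · rw [IHl.1 (w * appA φ l.la)]
    · rw [IHl.2 (w * appA φ l.ra)]
  have s3 : ∀ w : WithOne S, w * appA φ B.inv * appG φ r * appA φ B * appG φ c *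
      appA φ B.inv * appG φ r * appA φ B
      = w * appA φ B.inv * appG φ r * appA φ B := by
    intro w
    rcases hrb with ⟨hce, hbe⟩ | ⟨hce, hbe⟩ <;> subst hce <;> subst hbe <;>
      simp only [Anchor.inv_inv]
    · rw [IHr.1 (w * appA φ r.la)]
    · rw [IHr.2 (w * appA φ r.ra)]
  have magic := sandwichMagic (appG φ (G5.node l A c B r)) (appG φ c) (appG φ l)
    (appA φ A) (appA φ A.inv) (appA φ B.inv) (appG φ r) (appA φ B) r' l'
    hgg hfg hge hegf hR1 hL1 (ctx_idemG φ hφ hc) s2 s3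
  exact ⟨magic.2.2.1, magic.2.2.2.1, magic.2.2.2.2⟩

end Skel

section Fill

variable {X : Type u} {S : Type v} [Semigroup S] (φ : Letter X → WithOne S)

open G5

/-- the `C''` identity: the outer anchors of the `RgL` relation can be stripped. -/
theorem cpp (hφ : IsSkeleton φ) {i : ℕ} {g : G5 X} (h : Mem g (i + 2)) :
    appG φ g.rt * appA φ g.ra * appG φ g * appA φ g.la.inv * appG φ g.lt =
    appG φ g.rt * appA φ g.ra * appG φ g.ct * appA φ g.la.inv * appG φ g.lt := by
  obtain ⟨l, A, c, B, r, hg, hl, hc, hr, hla, hrb⟩ := mem_inv h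
  have hC := (lemABC φ hφ h).2.2
  have Kl := keyK φ hφ (i + 1) l hl
  have Kr := keyK φ hφ (i + 1) r hr
  subst hg
  simp only [G5.ct_node, G5.lt_node, G5.rt_node, G5.la_node, G5.ra_node] at *
  -- pre-multiply by  appG r * appA B * appG c  and absorb via keyK(r)
  have t0 := congrArg (fun z => appG φ r * appA φ B * appG φ c * z) hC
  simp only [← mul_assoc] at t0
  have pre : appG φ r * appA φ B * appG φ c * appA φ B.inv * appG φ r = appG φ r := by
    rcases hrb with ⟨hce, hbe⟩ | ⟨hce, hbe⟩ <;> subst hce <;> subst hbe <;>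
      simp only [Anchor.inv_inv]
    · have := Kr.1 1; simpa using this
    · have := Kr.2 1; simpa using this
  rw [pre] at t0
  -- post-multiply by  appG c * appA A.inv * appG l  and absorb via keyK(l)
  have t1 := congrArg (fun z => z * (appG φ c * appA φ A.inv * appG φ l)) t0
  simp only [← mul_assoc] at t1
  have post : ∀ w : WithOne S,
      w * appG φ l * appA φ A * appG φ c * appA φ A.inv * appG φ l = w * appG φ l := by
    intro w
    rcases hla with ⟨hce, hae⟩ | ⟨hce, hae⟩ <;> subst hce <;> subst hae <;>
      simp only [Anchor.inv_inv]
    · exact Kl.1 w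
    · exact Kl.2 w
  simpa only [post] using t1

/-- The valley-filling lemma. -/
theorem fill (hφ : IsSkeleton φ) {j : ℕ} {w₁ c w₂ : G5 X} {b a' : Anchor X}
    (hc : Mem c j) (h1 : Mem w₁ (j + 1)) (h2 : Mem w₂ (j + 1))
    (hd : RightAnch w₁ b c) (ha : LeftAnch c a' w₂) :
    (appG φ w₁ * appA φ b * appG φ c * appA φ a' * appG φ w₂ = appG φ w₁ ∧ w₁ = w₂)
    ∨ ∃ m, Mem m (j + 2) ∧ LeftAnch w₁ b m ∧ RightAnch m a' w₂ ∧
        appG φ w₁ * appA φ b * appG φ c * appA φ a' * appG φ w₂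
          = appG φ w₁ * appA φ b * appG φ m * appA φ a' * appG φ w₂ := by
  by_cases he : w₁ = w₂
  · subst he
    rcases hd with ⟨hc1, hb⟩ | ⟨hc1, hb⟩ <;> rcases ha with ⟨hc2, ha'⟩ | ⟨hc2, ha'⟩
    · -- lt / lt : zip via K1
      left
      refine ⟨?_, rfl⟩
      subst hc1 hb ha'
      have := (keyK φ hφ (j + 1) w₁ h1).1 1
      simpa using this
    · -- lt-descent, rt-ascent : fill via stepR
      right
      have hee : w₁.lt = w₁.rt := by rw [← hc1, hc2]
      have hE : MemE w₁ (j + 1) := memE_of_lt_eq_rt h1 (by omega) hee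
      refine ⟨G5.node w₁ w₁.ra.inv w₁.lt w₁.la.inv w₁, Mem.ofE (MemE.stepR hE), ?_, ?_, ?_⟩
      · exact Or.inr ⟨rfl, by simp only [G5.ra_node]; exact hb⟩
      · exact Or.inl ⟨rfl, by simp only [G5.la_node, Anchor.inv_inv]; exact ha'⟩
      · have hcpp := (cpp φ hφ (Mem.ofE (MemE.stepR hE))).symm
        simp only [G5.ct_node, G5.lt_node, G5.rt_node, G5.la_node, G5.ra_node,
          Anchor.inv_inv] at hcpp
        rw [hb, ha', hc1]
        exact hcpp
    · -- rt-descent, lt-ascent : fill via stepL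
      right
      have hee : w₁.lt = w₁.rt := by rw [← hc2, hc1]
      have hE : MemE w₁ (j + 1) := memE_of_lt_eq_rt h1 (by omega) hee
      refine ⟨G5.node w₁ w₁.la.inv w₁.lt w₁.ra.inv w₁, Mem.ofE (MemE.stepL hE), ?_, ?_, ?_⟩
      · exact Or.inr ⟨rfl, by simp only [G5.ra_node]; exact hb⟩
      · exact Or.inl ⟨rfl, by simp only [G5.la_node, Anchor.inv_inv]; exact ha'⟩
      · have hcpp := (cpp φ hφ (Mem.ofE (MemE.stepL hE))).symm
        simp only [G5.ct_node, G5.lt_node, G5.rt_node, G5.la_node, G5.ra_node,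
          Anchor.inv_inv] at hcpp
        rw [hb, ha', hc2]
        exact hcpp
    · -- rt / rt : zip via K2
      left
      refine ⟨?_, rfl⟩
      subst hc1 hb ha'
      have := (keyK φ hφ (j + 1) w₁ h1).2 1
      simpa using this
  · -- two distinct walls : fill via a MemD tuple
    right
    have hla : (c = w₂.lt ∧ a'.inv = w₂.la.inv) ∨ (c = w₂.rt ∧ a'.inv = w₂.ra.inv) := by
      rcases ha with ⟨hc2, ha'⟩ | ⟨hc2, ha'⟩
      · exact Or.inl ⟨hc2, by rw [ha']⟩
      · exact Or.inr ⟨hc2, by rw [ha']⟩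
    have hm : Mem (G5.node w₂ a'.inv c b w₁) (j + 2) :=
      Mem.ofD (MemD.mk h2 hc h1 (fun hq => he hq.symm) hla hd)
    refine ⟨G5.node w₂ a'.inv c b w₁, hm, Or.inr ⟨rfl, rfl⟩,
      Or.inl ⟨rfl, (Anchor.inv_inv a').symm⟩, ?_⟩
    have hcpp := (cpp φ hφ hm).symm
    simp only [G5.ct_node, G5.lt_node, G5.rt_node, G5.la_node, G5.ra_node,
      Anchor.inv_inv] at hcpp
    exact hcpp

end Fill

section Runs

variable {X : Type u} {S : Type v} [Semigroup S] (φ : Letter X → WithOne S)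

open G5

/-- ascending anchored runs: from `g` (height `i`) up to `T` (height `k`),
with word value `u` and reversed-word value `d`. -/
inductive AscRun : G5 X → ℕ → G5 X → ℕ → WithOne S → WithOne S → Prop
  | nil (g : G5 X) (i : ℕ) (hg : Mem g i) : AscRun g i g i (appG φ g) (appG φ g)
  | cons {h T : G5 X} {i k : ℕ} {u d : WithOne S} (g : G5 X) (a : Anchor X)
      (hg : Mem g i) (ha : LeftAnch g a h) (r : AscRun h (i + 1) T k u d) :
      AscRun g i T k (appG φ g * appA φ a * u) (d * appA φ a.inv * appG φ g)

/-- descending anchored runs: from `g` (height `i`) down to `e` (height `m`). -/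
inductive DscRun : G5 X → ℕ → G5 X → ℕ → WithOne S → WithOne S → Prop
  | nil (g : G5 X) (i : ℕ) (hg : Mem g i) : DscRun g i g i (appG φ g) (appG φ g)
  | cons {h e : G5 X} {i m : ℕ} {u d : WithOne S} (g : G5 X) (a : Anchor X)
      (hg : Mem g (i + 1)) (ha : RightAnch g a h) (r : DscRun h i e m u d) :
      DscRun g (i + 1) e m (appG φ g * appA φ a * u) (d * appA φ a.inv * appG φ g)

variable {φ}

lemma ascRun_head_mem {g i T k u d} (r : AscRun φ g i T k u d) : Mem g i := by
  cases r with
  | nil g i hg => exact hg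
  | @cons h T i k u d g a hg ha r => exact hg

lemma dscRun_head_mem {g i e m u d} (r : DscRun φ g i e m u d) : Mem g i := by
  cases r with
  | nil g i hg => exact hg
  | @cons h T i k u d g a hg ha r => exact hg

lemma ascRun_top_mem {g i T k u d} (r : AscRun φ g i T k u d) : Mem T k := by
  induction r with
  | nil g i hg => exact hg
  | @cons h T i k u d g a hg ha r ih => exact ih

lemma dscRun_end_mem {g i e m u d} (r : DscRun φ g i e m u d) : Mem e m := by
  induction r with
  | nil g i hg => exact hg
  | @cons h T i k u d g a hg ha r ih => exact ih

lemma ascRun_headG (hφ : IsSkeleton φ) {g i T k u d} (r : AscRun φ g i T k u d) : appG φ g * u = u := by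
  cases r with
  | nil g i hg => exact idemG φ hφ hg
  | @cons h T i k u d g a hg ha r =>
    calc appG φ g * (appG φ g * appA φ a * u) = appG φ g * appG φ g * appA φ a * u := by
          simp only [← mul_assoc]
      _ = appG φ g * appA φ a * u := by rw [idemG φ hφ hg]

lemma ascRun_d_headG (hφ : IsSkeleton φ) {g i T k u d} (r : AscRun φ g i T k u d) : d * appG φ g = d := by
  cases r with
  | nil g i hg => exact idemG φ hφ hg
  | @cons h T i k u d g a hg ha r => rw [mul_assoc, idemG φ hφ hg]

lemma ascRun_topG (hφ : IsSkeleton φ) {g i T k u d} (r : AscRun φ g i T k u d) : u * appG φ T = u := by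
  induction r with
  | nil g i hg => exact idemG φ hφ hg
  | @cons h T i k u d g a hg ha r ih => rw [mul_assoc, mul_assoc, ih, ← mul_assoc]

lemma ascRun_d_topG (hφ : IsSkeleton φ) {g i T k u d} (r : AscRun φ g i T k u d) : appG φ T * d = d := by
  induction r with
  | nil g i hg => exact idemG φ hφ hg
  | @cons h T i k u d g a hg ha r ih =>
    calc appG φ T * (d * appA φ a.inv * appG φ g)
        = appG φ T * d * appA φ a.inv * appG φ g := by simp only [← mul_assoc]
      _ = d * appA φ a.inv * appG φ g := by rw [ih]

lemma dscRun_headG (hφ : IsSkeleton φ) {g i e m u d} (r : DscRun φ g i e m u d) : appG φ g * u = u := by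
  cases r with
  | nil g i hg => exact idemG φ hφ hg
  | @cons h T i k u d g a hg ha r =>
    calc appG φ g * (appG φ g * appA φ a * u) = appG φ g * appG φ g * appA φ a * u := by
          simp only [← mul_assoc]
      _ = appG φ g * appA φ a * u := by rw [idemG φ hφ hg]

lemma dscRun_d_headG (hφ : IsSkeleton φ) {g i e m u d} (r : DscRun φ g i e m u d) : d * appG φ g = d := by
  cases r with
  | nil g i hg => exact idemG φ hφ hg
  | @cons h T i k u d g a hg ha r => rw [mul_assoc, idemG φ hφ hg]

lemma dscRun_endG (hφ : IsSkeleton φ) {g i e m u d} (r : DscRun φ g i e m u d) : u * appG φ e = u := by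
  induction r with
  | nil g i hg => exact idemG φ hφ hg
  | @cons h T i k u d g a hg ha r ih => rw [mul_assoc, mul_assoc, ih, ← mul_assoc]

lemma dscRun_d_endG (hφ : IsSkeleton φ) {g i e m u d} (r : DscRun φ g i e m u d) : appG φ e * d = d := by
  induction r with
  | nil g i hg => exact idemG φ hφ hg
  | @cons h T i k u d g a hg ha r ih =>
    calc appG φ T * (d * appA φ a.inv * appG φ g)
        = appG φ T * d * appA φ a.inv * appG φ g := by simp only [← mul_assoc]
      _ = d * appA φ a.inv * appG φ g := by rw [ih]

/-- descending zip: `u · d = G_top` -/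
lemma dscZip (hφ : IsSkeleton φ) {g i e m u d} (r : DscRun φ g i e m u d) : u * d = appG φ g := by
  induction r with
  | nil g i hg => exact idemG φ hφ hg
  | @cons h T i k u d g a hg ha r ih =>
    calc appG φ g * appA φ a * u * (d * appA φ a.inv * appG φ g)
        = appG φ g * appA φ a * (u * d) * appA φ a.inv * appG φ g := by
          simp only [mul_assoc]
      _ = appG φ g * appA φ a * appG φ h * appA φ a.inv * appG φ g := by rw [ih]
      _ = appG φ g := by
          rcases ha with ⟨hh, haa⟩ | ⟨hh, haa⟩ <;> subst hh <;> subst haa <;>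
            simp only [Anchor.inv_inv]
          · have := (keyK φ hφ _ _ hg).1 1; simpa using this
          · have := (keyK φ hφ _ _ hg).2 1; simpa using this

/-- ascending zip: `d · u = G_top` -/
lemma ascZip (hφ : IsSkeleton φ) {g i T k u d} (r : AscRun φ g i T k u d) : d * u = appG φ T := by
  induction r with
  | nil g i hg => exact idemG φ hφ hg
  | @cons h T i k u d g a hg ha r ih =>
    have e1 : appG φ h * u = u := ascRun_headG hφ r
    have e2 : d * appG φ h = d := ascRun_d_headG hφ r
    have hm : Mem h (i + 1) := ascRun_head_mem r
    calc d * appA φ a.inv * appG φ g * (appG φ g * appA φ a * u)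
        = d * appA φ a.inv * (appG φ g * appG φ g) * appA φ a * u := by
          simp only [mul_assoc]
      _ = d * appA φ a.inv * appG φ g * appA φ a * u := by
          rw [idemG φ hφ hg]
      _ = d * appG φ h * appA φ a.inv * appG φ g * appA φ a * (appG φ h * u) := by
          rw [e1, e2]
      _ = d * appG φ h * appA φ a.inv * appG φ g * appA φ a * appG φ h * u := by
          simp only [← mul_assoc]
      _ = d * appG φ h * u := by
          rcases ha with ⟨hh, haa⟩ | ⟨hh, haa⟩ <;> subst hh <;> subst haa
          · rw [(keyK φ hφ _ _ hm).1 d]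
          · rw [(keyK φ hφ _ _ hm).2 d]
      _ = d * u := by rw [e2]
      _ = appG φ T := ih

/-- concatenation of ascending runs -/
lemma ascConcat (hφ : IsSkeleton φ) {g i P k T n u d u' d'} (r1 : AscRun φ g i P k u d)
    (r2 : AscRun φ P k T n u' d') : AscRun φ g i T n (u * u') (d' * d) := by
  induction r1 with
  | nil g i hg =>
    rw [ascRun_headG hφ r2, ascRun_d_headG hφ r2]
    exact r2
  | @cons h T i k u d g a hg ha r ih =>
    have := AscRun.cons (φ := φ) g a hg ha (ih r2)
    simpa only [mul_assoc] using this

/-- concatenation of descending runs -/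
lemma dscConcat (hφ : IsSkeleton φ) {g i P k e m u d u' d'} (r1 : DscRun φ g i P k u d)
    (r2 : DscRun φ P k e m u' d') : DscRun φ g i e m (u * u') (d' * d) := by
  induction r1 with
  | nil g i hg =>
    rw [dscRun_headG hφ r2, dscRun_d_headG hφ r2]
    exact r2
  | @cons h T i k u d g a hg ha r ih =>
    have := DscRun.cons (φ := φ) g a hg ha (ih r2)
    simpa only [mul_assoc] using this

lemma appA_mem (a : Anchor X) : appA φ a ∈ Subsemigroup.closure (Set.range φ) :=
  Subsemigroup.subset_closure ⟨Sum.inl a, rfl⟩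

lemma appG_mem (g : G5 X) : appG φ g ∈ Subsemigroup.closure (Set.range φ) := by
  rw [appG]
  split
  · exact Subsemigroup.subset_closure ⟨_, rfl⟩
  · exact Subsemigroup.subset_closure ⟨_, rfl⟩

lemma ascRun_mem {g i T k u d} (r : AscRun φ g i T k u d) :
    u ∈ Subsemigroup.closure (Set.range φ) ∧ d ∈ Subsemigroup.closure (Set.range φ) := by
  induction r with
  | nil g i hg => exact ⟨appG_mem g, appG_mem g⟩
  | @cons h T i k u d g a hg ha r ih =>
    exact ⟨mul_mem (mul_mem (appG_mem g) (appA_mem a)) ih.1,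
      mul_mem (mul_mem ih.2 (appA_mem a.inv)) (appG_mem g)⟩

lemma dscRun_mem {g i e m u d} (r : DscRun φ g i e m u d) :
    u ∈ Subsemigroup.closure (Set.range φ) ∧ d ∈ Subsemigroup.closure (Set.range φ) := by
  induction r with
  | nil g i hg => exact ⟨appG_mem g, appG_mem g⟩
  | @cons h T i k u d g a hg ha r ih =>
    exact ⟨mul_mem (mul_mem (appG_mem g) (appA_mem a)) ih.1,
      mul_mem (mul_mem ih.2 (appA_mem a.inv)) (appG_mem g)⟩

end Runs

section Mountains

variable {X : Type u} {S : Type v} [Semigroup S] {φ : Letter X → WithOne S}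

open G5

/-- the zip-up cascade: a descent step into an ascending run can be traded for an
ascending run from above, followed by a descent. -/
lemma zipup (hφ : IsSkeleton φ) {c j T k uA dA} (r : AscRun φ c j T k uA dA) :
    ∀ {W : G5 X} {β : Anchor X}, Mem W (j + 1) → RightAnch W β c →
    ∃ T' k' u₁ d₁ u₂ d₂, AscRun φ W (j + 1) T' k' u₁ d₁ ∧ DscRun φ T' k' T k u₂ d₂ ∧
      appG φ W * appA φ β * uA = u₁ * u₂ := by
  induction r with
  | nil c j hc =>
    intro W β hW hd
    refine ⟨W, j + 1, appG φ W, appG φ W, appG φ W * appA φ β * appG φ c,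
      appG φ c * appA φ β.inv * appG φ W, AscRun.nil W (j + 1) hW,
      DscRun.cons W β hW hd (DscRun.nil c j hc), ?_⟩
    calc appG φ W * appA φ β * appG φ c
        = appG φ W * appG φ W * appA φ β * appG φ c := by rw [idemG φ hφ hW]
      _ = appG φ W * (appG φ W * appA φ β * appG φ c) := by simp only [← mul_assoc]
  | @cons w₂ T j k u d c a hc ha r ih =>
    intro W β hW hd
    rcases fill φ hφ hc hW (ascRun_head_mem r) hd ha with ⟨hval0, heq⟩ |
      ⟨m, hm, hLm, hRm, hval⟩
    · -- zip case : W = w₂ and the pattern collapses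
      subst heq
      have hu := ascRun_headG hφ r
      refine ⟨T, k, u, d, appG φ T, appG φ T, r,
        DscRun.nil T k (ascRun_top_mem r), ?_⟩
      rw [ascRun_topG hφ r]
      calc appG φ W * appA φ β * (appG φ c * appA φ a * u)
          = appG φ W * appA φ β * appG φ c * appA φ a * u := by simp only [← mul_assoc]
        _ = appG φ W * appA φ β * appG φ c * appA φ a * (appG φ W * u) := by rw [hu]
        _ = appG φ W * appA φ β * appG φ c * appA φ a * appG φ W * u := by
            simp only [← mul_assoc]
        _ = appG φ W * u := by rw [hval0]
        _ = u := hu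
    · -- fill case : recurse above the new tuple m
      obtain ⟨T', k', u₁, d₁, u₂, d₂, rasc, rdsc, ihv⟩ := ih hm hRm
      have hu := ascRun_headG hφ r
      refine ⟨T', k', appG φ W * appA φ β * u₁, d₁ * appA φ β.inv * appG φ W, u₂, d₂,
        AscRun.cons W β hW hLm rasc, rdsc, ?_⟩
      calc appG φ W * appA φ β * (appG φ c * appA φ a * u)
          = appG φ W * appA φ β * appG φ c * appA φ a * u := by simp only [← mul_assoc]
        _ = appG φ W * appA φ β * appG φ c * appA φ a * (appG φ w₂ * u) := by rw [hu]
        _ = appG φ W * appA φ β * appG φ c * appA φ a * appG φ w₂ * u := by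
            simp only [← mul_assoc]
        _ = appG φ W * appA φ β * appG φ m * appA φ a * appG φ w₂ * u := by rw [hval]
        _ = appG φ W * appA φ β * appG φ m * appA φ a * (appG φ w₂ * u) := by
            simp only [← mul_assoc]
        _ = appG φ W * appA φ β * appG φ m * appA φ a * u := by rw [hu]
        _ = appG φ W * appA φ β * (appG φ m * appA φ a * u) := by simp only [← mul_assoc]
        _ = appG φ W * appA φ β * (u₁ * u₂) := by rw [ihv]
        _ = appG φ W * appA φ β * u₁ * u₂ := by simp only [← mul_assoc]

/-- merging a descent (to the ground) with a mountain. -/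
lemma merge (hφ : IsSkeleton φ) {P j E m u d} (r : DscRun φ P j E m u d)
    (hE : E = G5.one) (hm : m = 0) :
    ∀ {T' k' v₁ e₁ v₂ e₂}, AscRun φ G5.one 0 T' k' v₁ e₁ →
      DscRun φ T' k' G5.one 0 v₂ e₂ →
    ∃ T k w₁ f₁ w₂ f₂, AscRun φ P j T k w₁ f₁ ∧ DscRun φ T k G5.one 0 w₂ f₂ ∧
      u * (v₁ * v₂) = w₁ * w₂ := by
  induction r with
  | nil g i hg =>
    subst hE; subst hm
    intro T' k' v₁ e₁ v₂ e₂ rasc rdsc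
    refine ⟨T', k', v₁, e₁, v₂, e₂, rasc, rdsc, ?_⟩
    calc appG φ G5.one * (v₁ * v₂) = appG φ G5.one * v₁ * v₂ := by simp only [← mul_assoc]
      _ = v₁ * v₂ := by rw [ascRun_headG hφ rasc]
  | @cons nx E' i m' u' d' P β hg ha r ih =>
    subst hE; subst hm
    intro T' k' v₁ e₁ v₂ e₂ rasc rdsc
    obtain ⟨T, k, w₁, f₁, w₂, f₂, hasc, hdsc, hv⟩ := ih rfl rfl rasc rdsc
    obtain ⟨T₂, k₂, x₁, y₁, x₂, y₂, zasc, zdsc, zv⟩ := zipup hφ hasc hg ha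
    refine ⟨T₂, k₂, x₁, y₁, x₂ * w₂, f₂ * y₂, zasc, dscConcat hφ zdsc hdsc, ?_⟩
    calc appG φ P * appA φ β * u' * (v₁ * v₂)
        = appG φ P * appA φ β * (u' * (v₁ * v₂)) := by simp only [← mul_assoc]
      _ = appG φ P * appA φ β * (w₁ * w₂) := by rw [hv]
      _ = appG φ P * appA φ β * w₁ * w₂ := by simp only [← mul_assoc]
      _ = x₁ * x₂ * w₂ := by rw [zv]
      _ = x₁ * (x₂ * w₂) := by rw [mul_assoc]

/-- every member of `𝒢'` is the value of an ascent from the ground and of a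
descent to the ground. -/
lemma tuple_runs (hφ : IsSkeleton φ) : ∀ (i : ℕ) (g : G5 X), Mem g i →
    (∃ u d, AscRun φ G5.one 0 g i u d ∧ u = appG φ g) ∧
    (∃ u d, DscRun φ g i G5.one 0 u d ∧ u = appG φ g)
  | 0, g, h => by
    obtain rfl := mem_zero h
    exact ⟨⟨_, _, AscRun.nil _ 0 Mem.one, rfl⟩, ⟨_, _, DscRun.nil _ 0 Mem.one, rfl⟩⟩
  | 1, g, h => by
    obtain ⟨x, rfl⟩ := mem_one_inv h
    have hA1 : LeftAnch G5.one Anchor.one (G5.base x) := Or.inl ⟨rfl, rfl⟩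
    have hA2 : RightAnch (G5.base x) Anchor.one G5.one := Or.inl ⟨rfl, rfl⟩
    constructor
    · refine ⟨_, _, AscRun.cons G5.one Anchor.one Mem.one hA1
        (AscRun.nil (G5.base x) 1 h), ?_⟩
      simp only [appG_one, gbase_eq φ hφ, ← mul_assoc,
        (hφ.2.1 Anchor.one).1, (hφ.2.1 (Anchor.pos x)).1]
    · refine ⟨_, _, DscRun.cons (G5.base x) Anchor.one h hA2
        (DscRun.nil G5.one 0 Mem.one), ?_⟩
      rw [appG_one, gbase_eq φ hφ x, mul_assoc, mul_assoc, (hφ.2.1 Anchor.one).1,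
        (hφ.2.1 (Anchor.neg x)).2]
  | (i + 2), g, h => by
    obtain ⟨l, A, c, B, r, hg, hl, hc, hr, hla, hrb⟩ := mem_inv h
    obtain ⟨⟨uc, dc, rca, hca⟩, ⟨uc', dc', rcd, hcd⟩⟩ := tuple_runs hφ i c hc
    have habc := lemABC φ hφ h
    constructor
    · -- ascent
      have hLcl : LeftAnch c A.inv l := by
        rcases hla with ⟨h1, h2⟩ | ⟨h1, h2⟩
        · exact Or.inl ⟨h1, by rw [h2, Anchor.inv_inv]⟩
        · exact Or.inr ⟨h1, by rw [h2, Anchor.inv_inv]⟩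
      have hLlg : LeftAnch l A g := by
        subst hg; exact Or.inl ⟨rfl, rfl⟩
      have r2 : AscRun φ c i g (i + 2)
          (appG φ c * appA φ A.inv * (appG φ l * appA φ A * appG φ g))
          (appG φ g * appA φ A.inv * appG φ l * appA φ A * appG φ c) := by
        have := AscRun.cons (φ := φ) c A.inv hc hLcl
          (AscRun.cons (φ := φ) l A hl hLlg (AscRun.nil g (i + 2) h))
        simpa only [Anchor.inv_inv, mul_assoc] using this
      have total := ascConcat hφ rca r2
      refine ⟨_, _, total, ?_⟩
      rw [hca]
      have h1 := habc.1
      subst hg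
      simp only [G5.ct_node, G5.lt_node, G5.la_node] at h1
      calc appG φ c * (appG φ c * appA φ A.inv * (appG φ l * appA φ A *
              appG φ (G5.node l A c B r)))
          = appG φ c * appG φ c * appA φ A.inv * appG φ l * appA φ A *
              appG φ (G5.node l A c B r) := by simp only [← mul_assoc]
        _ = appG φ c * appA φ A.inv * appG φ l * appA φ A *
              appG φ (G5.node l A c B r) := by rw [idemG φ hφ hc]
        _ = appG φ (G5.node l A c B r) := h1
    · -- descent
      have hRgr : RightAnch g B.inv r := by
        subst hg; exact Or.inr ⟨rfl, rfl⟩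
      have hRrc : RightAnch r B c := hrb
      have r2 : DscRun φ g (i + 2) c i
          (appG φ g * appA φ B.inv * (appG φ r * appA φ B * appG φ c))
          (appG φ c * appA φ B.inv * appG φ r * appA φ B * appG φ g) := by
        have := DscRun.cons (φ := φ) g B.inv h hRgr
          (DscRun.cons (φ := φ) r B hr hRrc (DscRun.nil c i hc))
        simpa only [Anchor.inv_inv, mul_assoc] using this
      have total := dscConcat hφ r2 rcd
      refine ⟨_, _, total, ?_⟩
      rw [hcd]
      have h2 := habc.2.1
      subst hg
      simp only [G5.ct_node, G5.rt_node, G5.ra_node] at h2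
      calc appG φ (G5.node l A c B r) * appA φ B.inv *
              (appG φ r * appA φ B * appG φ c) * appG φ c
          = appG φ (G5.node l A c B r) * appA φ B.inv * appG φ r * appA φ B *
              (appG φ c * appG φ c) := by simp only [← mul_assoc]
        _ = appG φ (G5.node l A c B r) * appA φ B.inv * appG φ r * appA φ B *
              appG φ c := by rw [idemG φ hφ hc]
        _ = appG φ (G5.node l A c B r) := h2

/-- each letter value is the value of a mountain. -/
lemma letter_hill (hφ : IsSkeleton φ) (l : Letter X) :
    ∃ T k u d u' d', AscRun φ G5.one 0 T k u d ∧ DscRun φ T k G5.one 0 u' d' ∧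
      φ l = u * u' := by
  have f1 : ∀ a : Anchor X, appA φ Anchor.one * appA φ a = appA φ a := fun a => (hφ.2.1 a).1
  have f2 : ∀ a : Anchor X, appA φ a * appA φ Anchor.one = appA φ a := fun a => (hφ.2.1 a).2
  obtain (a | ⟨g, htup⟩) := l
  · obtain (_ | x | x) := a
    · refine ⟨G5.one, 0, _, _, _, _, AscRun.nil _ 0 Mem.one, DscRun.nil _ 0 Mem.one, ?_⟩
      rw [appG_one, f1]
      rfl
    · -- pos x
      have hbx : Mem (G5.base x) 1 := Mem.ofE (MemE.base x)
      have hA1 : LeftAnch G5.one Anchor.one (G5.base x) := Or.inl ⟨rfl, rfl⟩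
      have hA2 : RightAnch (G5.base x) (Anchor.pos x) G5.one := Or.inr ⟨rfl, rfl⟩
      refine ⟨G5.base x, 1, _, _, _, _,
        AscRun.cons G5.one Anchor.one Mem.one hA1 (AscRun.nil (G5.base x) 1 hbx),
        DscRun.cons (G5.base x) (Anchor.pos x) hbx hA2 (DscRun.nil G5.one 0 Mem.one), ?_⟩
      show appA φ (Anchor.pos x) = _
      simp only [appG_one, gbase_eq φ hφ, ← mul_assoc, f1, f2,
        (hφ.1 x).2.2.1, (hφ.1 x).2.2.2.1, ctx_aao φ hφ, ctx_aoa φ hφ,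
        ctx_pnp φ hφ, ctx_npn φ hφ]
    · -- neg x
      have hbx : Mem (G5.base x) 1 := Mem.ofE (MemE.base x)
      have hA1 : LeftAnch G5.one (Anchor.neg x) (G5.base x) := Or.inr ⟨rfl, rfl⟩
      have hA2 : RightAnch (G5.base x) Anchor.one G5.one := Or.inl ⟨rfl, rfl⟩
      refine ⟨G5.base x, 1, _, _, _, _,
        AscRun.cons G5.one (Anchor.neg x) Mem.one hA1 (AscRun.nil (G5.base x) 1 hbx),
        DscRun.cons (G5.base x) Anchor.one hbx hA2 (DscRun.nil G5.one 0 Mem.one), ?_⟩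
      show appA φ (Anchor.neg x) = _
      simp only [appG_one, gbase_eq φ hφ, ← mul_assoc, f1, f2,
        (hφ.1 x).2.2.1, (hφ.1 x).2.2.2.1, ctx_aao φ hφ, ctx_aoa φ hφ,
        ctx_pnp φ hφ, ctx_npn φ hφ]
  · obtain ⟨i, hi1, hi⟩ := htup
    obtain ⟨⟨u, du, ru, hu⟩, ⟨u', du', ru', hu'⟩⟩ := tuple_runs hφ i g hi
    refine ⟨g, i, u, du, u', du', ru, ru', ?_⟩
    rw [hu, hu', idemG φ hφ hi]
    exact (appG_tup φ ⟨i, hi1, hi⟩).symm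

/-- every word value is the value of a mountain. -/
lemma word_hill (hφ : IsSkeleton φ) (w : W X) :
    ∃ T k u d u' d', AscRun φ G5.one 0 T k u d ∧ DscRun φ T k G5.one 0 u' d' ∧
      (FreeSemigroup.lift φ) w = u * u' := by
  induction w using FreeSemigroup.recOnMul with
  | ih1 l =>
    obtain ⟨T, k, u, d, u', d', h1, h2, h3⟩ := letter_hill hφ l
    exact ⟨T, k, u, d, u', d', h1, h2, by rw [FreeSemigroup.lift_of]; exact h3⟩
  | ih2 l y hl hy =>
    obtain ⟨T, k, u, d, u', d', h1, h2, h3⟩ := hl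
    obtain ⟨T', k', v, e, v', e', g1, g2, g3⟩ := hy
    obtain ⟨T₂, k₂, w₁, f₁, w₂, f₂, m1, m2, m3⟩ := merge hφ h2 rfl rfl g1 g2
    refine ⟨T₂, k₂, u * w₁, f₁ * d, w₂, f₂, ascConcat hφ h1 m1, m2, ?_⟩
    rw [map_mul, h3, g3]
    calc u * u' * (v * v')
        = u * (u' * (v * v')) := by simp only [← mul_assoc]
      _ = u * (w₁ * w₂) := by rw [m3]
      _ = u * w₁ * w₂ := by rw [← mul_assoc]

end Mountains

section Final

variable {X : Type u} {S : Type v} [Semigroup S] {φ : Letter X → WithOne S}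

open G5

lemma lift_wA (a : Anchor X) : (FreeSemigroup.lift φ) (wA a) = appA φ a := by
  rw [wA]; exact FreeSemigroup.lift_of (f := φ) _

lemma lift_wG (g : G5 X) : (FreeSemigroup.lift φ) (wG g) = appG φ g := by
  by_cases h : g.IsTup
  · rw [wG, appG, dif_pos h, dif_pos h]; exact FreeSemigroup.lift_of (f := φ) _
  · rw [wG, appG, dif_neg h, dif_neg h, lift_wA]; rfl

lemma oneG_left (hφ : IsSkeleton φ) {i : ℕ} {g : G5 X} (h : Mem g i) :
    appA φ Anchor.one * appG φ g = appG φ g := by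
  obtain ⟨⟨u, d, ru, hu⟩, -⟩ := tuple_runs hφ i g h
  have := ascRun_headG hφ ru
  rw [hu, appG_one] at this
  exact this

lemma oneG_right (hφ : IsSkeleton φ) {i : ℕ} {g : G5 X} (h : Mem g i) :
    appG φ g * appA φ Anchor.one = appG φ g := by
  obtain ⟨-, ⟨u, d, ru, hu⟩⟩ := tuple_runs hφ i g h
  have := dscRun_endG hφ ru
  rw [hu, appG_one] at this
  exact this

/-- the lift respects the defining relations -/
lemma rel_lift (hφ : IsSkeleton φ) {a b : W X} (h : Rel a b) :
    (FreeSemigroup.lift φ) a = (FreeSemigroup.lift φ) b := by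
  cases h with
  | xinvx x =>
    simp only [map_mul, lift_wA]
    exact (hφ.1 x).2.2.1
  | invxinv x =>
    simp only [map_mul, lift_wA]
    exact (hφ.1 x).2.2.2.1
  | gbase x =>
    simp only [map_mul, lift_wA, lift_wG]
    exact gbase_eq φ hφ x
  | one_mul h =>
    obtain ⟨i, hi⟩ := h
    simp only [map_mul, lift_wA, lift_wG]
    exact oneG_left hφ hi
  | mul_one h =>
    obtain ⟨i, hi⟩ := h
    simp only [map_mul, lift_wA, lift_wG]
    exact oneG_right hφ hi
  | idem h =>
    obtain ⟨i, hi⟩ := h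
    simp only [map_mul, lift_wG]
    exact idemG φ hφ hi
  | @cLg g i h h2 =>
    obtain ⟨i', rfl⟩ : ∃ i', i = i' + 2 := ⟨i - 2, by omega⟩
    simp only [wL, map_mul, lift_wA, lift_wG, ← mul_assoc]
    exact (lemABC φ hφ h).1
  | @gRc g i h h2 =>
    obtain ⟨i', rfl⟩ : ∃ i', i = i' + 2 := ⟨i - 2, by omega⟩
    simp only [wR, map_mul, lift_wA, lift_wG, ← mul_assoc]
    exact (lemABC φ hφ h).2.1
  | @RgL g i h h2 =>
    obtain ⟨i', rfl⟩ : ∃ i', i = i' + 2 := ⟨i - 2, by omega⟩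
    simp only [wR, wL, map_mul, lift_wA, lift_wG, ← mul_assoc]
    exact (lemABC φ hφ h).2.2

/-- the induced homomorphism on the quotient -/
noncomputable def phibar (hφ : IsSkeleton φ) : Fo X →ₙ* WithOne S where
  toFun q := Con.liftOn q ⇑(FreeSemigroup.lift φ)
    (fun a b hab => by
      have hker : rho X ≤ Con.ker (FreeSemigroup.lift φ) :=
        Con.conGen_le.mpr fun x y hr => rel_lift hφ hr
      exact Con.le_def.mp hker hab)
  map_mul' a b := Con.induction_on₂ a b fun x y => by
    rw [← Con.coe_mul]
    exact map_mul (FreeSemigroup.lift φ) x y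

lemma phibar_coe (hφ : IsSkeleton φ) (w : W X) :
    phibar hφ (w : Fo X) = (FreeSemigroup.lift φ) w := by
  simp only [phibar, MulHom.coe_mk]
  exact Con.liftOn_coe _ _ _ w

lemma cl_eq (u : W X) : cl u = (u : Fo X) := rfl

lemma lift_mem_closure (w : W X) :
    (FreeSemigroup.lift φ) w ∈ Subsemigroup.closure (Set.range φ) := by
  induction w using FreeSemigroup.recOnMul with
  | ih1 l =>
    rw [FreeSemigroup.lift_of]
    exact Subsemigroup.subset_closure ⟨l, rfl⟩
  | ih2 l y hl hy =>
    rw [map_mul]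
    exact mul_mem hl hy

end Final


/-- A skeleton mapping extends uniquely to a homomorphism `F°(X) → S¹`, whose image is
the (regular) subsemigroup generated by `𝒢φ`, a monoid with identity `1φ`. -/
theorem statement18 (X : Type u) [Nonempty X] (S : Type v) [Semigroup S]
    (φ : Letter X → WithOne S) (hφ : IsSkeleton φ) :
    ∃ φbar : Fo X →ₙ* WithOne S,
      (∀ l : Letter X, φbar (cl (FreeSemigroup.of l)) = φ l) ∧
      (∀ ψ : Fo X →ₙ* WithOne S,
        (∀ l : Letter X, ψ (cl (FreeSemigroup.of l)) = φ l) → ψ = φbar) ∧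
      Set.range ⇑φbar = ↑(Subsemigroup.closure (Set.range φ)) ∧
      (∀ s ∈ Set.range ⇑φbar, ∃ t ∈ Set.range ⇑φbar, s * t * s = s ∧ t * s * t = t) ∧
      appA φ Anchor.one ∈ Set.range ⇑φbar ∧
      (∀ s ∈ Set.range ⇑φbar,
        appA φ Anchor.one * s = s ∧ s * appA φ Anchor.one = s) := by
  refine ⟨phibar hφ, ?_, ?_, ?_, ?_, ?_, ?_⟩
  · -- agrees with φ on letters
    intro l
    rw [cl_eq, phibar_coe hφ, FreeSemigroup.lift_of]
  · -- uniqueness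
    intro ψ hψ
    ext q
    induction q using Con.induction_on with
    | _ w =>
      induction w using FreeSemigroup.recOnMul with
      | ih1 l =>
        rw [phibar_coe hφ, FreeSemigroup.lift_of]
        exact hψ l
      | ih2 l y hl hy =>
        have hcm : ((FreeSemigroup.of l * y : W X) : Fo X)
            = ((FreeSemigroup.of l : W X) : Fo X) * ((y : W X) : Fo X) := Con.coe_mul _ _
        rw [hcm, map_mul, map_mul, hl, hy]
  · -- range equals the closure
    apply Set.eq_of_subset_of_subset
    · rintro s ⟨q, rfl⟩
      induction q using Con.induction_on with
      | _ w =>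
        rw [phibar_coe hφ]
        exact lift_mem_closure w
    · intro s hs
      have hR : Subsemigroup.closure (Set.range φ) ≤
          { carrier := Set.range ⇑(phibar hφ)
            mul_mem' := by
              rintro a b ⟨p, rfl⟩ ⟨q, rfl⟩
              exact ⟨p * q, map_mul _ _ _⟩ } := by
        rw [Subsemigroup.closure_le]
        rintro t ⟨l, rfl⟩
        exact ⟨((FreeSemigroup.of l : W X) : Fo X), by rw [phibar_coe hφ, FreeSemigroup.lift_of]⟩
      exact hR hs
  · -- regularity of the image
    rintro s ⟨q, rfl⟩
    induction q using Con.induction_on with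
    | _ w =>
      rw [phibar_coe hφ]
      obtain ⟨T, k, u, d, u', d', h1, h2, h3⟩ := word_hill hφ w
      rw [h3]
      refine ⟨d' * d, ?_, ?_, ?_⟩
      · -- the inverse lies in the image
        have hmem : d' * d ∈ Subsemigroup.closure (Set.range φ) :=
          mul_mem (dscRun_mem h2).2 (ascRun_mem h1).2
        -- transfer membership through the range identity proven above
        have hsub : (Subsemigroup.closure (Set.range φ) : Set (WithOne S)) ⊆
            Set.range ⇑(phibar hφ) := by
          have hR : Subsemigroup.closure (Set.range φ) ≤
              { carrier := Set.range ⇑(phibar hφ)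
                mul_mem' := by
                  rintro a b ⟨p, rfl⟩ ⟨q, rfl⟩
                  exact ⟨p * q, map_mul _ _ _⟩ } := by
            rw [Subsemigroup.closure_le]
            rintro t ⟨l, rfl⟩
            exact ⟨((FreeSemigroup.of l : W X) : Fo X),
              by rw [phibar_coe hφ, FreeSemigroup.lift_of]⟩
          exact fun x hx => hR hx
        exact hsub hmem
      · -- s * t * s = s
        have z1 : u' * d' = appG φ T := dscZip hφ h2
        have z2 : d * u = appG φ T := ascZip hφ h1
        have a1 : u * appG φ T = u := ascRun_topG hφ h1
        calc u * u' * (d' * d) * (u * u')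
            = u * (u' * d') * (d * u) * u' := by simp only [← mul_assoc]
          _ = u * appG φ T * appG φ T * u' := by rw [z1, z2]
          _ = u * u' := by rw [a1, a1]
      · -- t * s * t = t
        have z1 : u' * d' = appG φ T := dscZip hφ h2
        have z2 : d * u = appG φ T := ascZip hφ h1
        have a4 : d' * appG φ T = d' := dscRun_d_headG hφ h2
        calc d' * d * (u * u') * (d' * d)
            = d' * (d * u) * (u' * d') * d := by simp only [← mul_assoc]
          _ = d' * appG φ T * appG φ T * d := by rw [z1, z2]
          _ = d' * d := by rw [a4, a4]
  · -- 1φ is in the image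
    exact ⟨((FreeSemigroup.of (Sum.inl Anchor.one) : W X) : Fo X),
      by rw [phibar_coe hφ]; exact FreeSemigroup.lift_of (f := φ) _⟩
  · -- 1φ is an identity on the image
    rintro s ⟨q, rfl⟩
    induction q using Con.induction_on with
    | _ w =>
      rw [phibar_coe hφ]
      obtain ⟨T, k, u, d, u', d', h1, h2, h3⟩ := word_hill hφ w
      rw [h3]
      constructor
      · have hu : appG φ G5.one * u = u := ascRun_headG hφ h1
        rw [appG_one] at hu
        calc appA φ Anchor.one * (u * u') = appA φ Anchor.one * u * u' := by
              rw [← mul_assoc]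
          _ = u * u' := by rw [hu]
      · have hu : u' * appG φ G5.one = u' := dscRun_endG hφ h2
        rw [appG_one] at hu
        calc u * u' * appA φ Anchor.one = u * (u' * appA φ Anchor.one) := by
              rw [mul_assoc]
          _ = u * u' := by rw [hu]

end Paper
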